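/- Let (Σ,μ) be a measure space, 0 < p < ∞, and let 𝒦 be the Kalton–Peck map on L_p(μ). For every family u_1,…,u_n of norm-one pairwise disjointly supported functions in L_p(μ) and every choice of signs ε_1,…,ε_n ∈ {−1,1}, one has 𝒦(Σ_{i=1}^n ε_i u_i) − Σ_{i=1}^n ε_i 𝒦(u_i) = −(log n / p)·Σ_{i=1}^n ε_i u_i; in particular ‖𝒦(Σ ε_i u_i) − Σ ε_i 𝒦(u_i)‖_p = p^{−1} n^{1/p} log n, and hence ∇_{[(u_1,…,u_n)]}𝒦 = p^{−1} n^{1/p} log n. -/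

import Mathlib

open MeasureTheory
open scoped ENNReal

noncomputable section

/-- The Kalton–Peck map `𝒦(x) = x · log(|x| / ‖x‖)` on `L_p(μ)`, as a map into `L⁰(μ)`
(with the junk-value conventions `log 0 = 0`, `y/0 = 0`). -/
def KaltonPeck {α : Type*} [MeasurableSpace α] (q : ℝ≥0∞) (μ : Measure α)
    (x : Lp ℝ q μ) : α →ₘ[μ] ℝ :=
  AEEqFun.mk (fun a => x a * Real.log (|x a| / ‖x‖)) <| by
    have h := (Lp.aestronglyMeasurable x).aemeasurable
    exact (h.mul (Real.measurable_log.comp_aemeasurable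
      ((measurable_abs.comp_aemeasurable h).div aemeasurable_const))).aestronglyMeasurable

/-- The average `∇_{[b]}Ω` over all choices of signs of
`‖Ω (∑ ± b_k) - ∑ ± Ω(b_k)‖_p` (computed in `ℝ≥0∞`). -/
def nabla {α : Type*} [MeasurableSpace α] {μ : Measure α} {q : ℝ≥0∞}
    (Ω : Lp ℝ q μ → (α →ₘ[μ] ℝ)) {n : ℕ} (b : Fin n → Lp ℝ q μ) : ℝ≥0∞ :=
  (2 ^ n : ℝ≥0∞)⁻¹ * ∑ ε : Fin n → Bool,
    eLpNorm (⇑(Ω (∑ k, (if ε k then (1:ℝ) else -1) • b k)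
      - ∑ k, (if ε k then (1:ℝ) else -1) • Ω (b k))) q μ

/-! At every point at most one `ε i * u i a` is nonzero, so `g t = t * log |t|`, being odd and
vanishing at `0`, satisfies `g (∑ ε i * u i a) = ∑ ε i * g (u i a)`. Splitting
`log (|x| / ‖x‖) = log |x| - log ‖x‖` then gives
`𝒦(∑ ε_i u_i) - ∑ ε_i 𝒦(u_i) = -log ‖∑ ε_i u_i‖ • ∑ ε_i u_i`. The same disjointness makes
`‖∑ ε_i u_i‖_p ^ p = ∑ ‖u_i‖_p ^ p = n`, so the logarithm is `log n / p`. The norm identity holds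
for every choice of signs, hence also for their average `∇`. -/

theorem map_sum_of_pairwise_eq_zero {ι M N : Type*} [Fintype ι] [AddCommMonoid M]
    [AddCommMonoid N] {g : M → N} (hg : g 0 = 0) {w : ι → M}
    (hw : Pairwise fun i j => w i = 0 ∨ w j = 0) :
    g (∑ i, w i) = ∑ i, g (w i) := by
  by_cases hzero : ∀ i, w i = 0
  · simp [hzero, hg]
  obtain ⟨j, hj⟩ := not_forall.mp hzero
  have hother : ∀ i ≠ j, w i = 0 := fun i hij => (hw hij).resolve_right hj
  rw [Finset.sum_eq_single j (fun i _ hij => hother i hij) (by simp),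
    Finset.sum_eq_single j (fun i _ hij => by rw [hother i hij, hg]) (by simp)]

theorem Real.mul_log_abs_div (x : ℝ) {c : ℝ} (hc : c ≠ 0) :
    x * Real.log (|x| / c) = x * Real.log |x| - Real.log c * x := by
  rcases eq_or_ne x 0 with rfl | hx
  · simp
  rw [Real.log_div (abs_ne_zero.2 hx) hc]
  ring

namespace MeasureTheory

variable {α ι : Type*} [MeasurableSpace α] {μ : Measure α}

theorem ae_pairwise_of_pairwise [Countable ι] {P : ι → ι → α → Prop}
    (h : Pairwise fun i j => ∀ᵐ a ∂μ, P i j a) : ∀ᵐ a ∂μ, Pairwise fun i j => P i j a := by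
  simpa only [Pairwise, ae_all_iff] using h

theorem AEEqFun.coeFn_sum_smul {𝕜 β : Type*} [TopologicalSpace β] [AddCommMonoid β]
    [ContinuousAdd β] [SMul 𝕜 β] [ContinuousConstSMul 𝕜 β]
    (s : Finset ι) (c : ι → 𝕜) (f : ι → α →ₘ[μ] β) :
    ⇑(∑ i ∈ s, c i • f i) =ᵐ[μ] fun a => ∑ i ∈ s, c i • f i a := by
  induction s using Finset.cons_induction with
  | empty => exact AEEqFun.coeFn_zero
  | cons i s _ ih =>
    simp only [Finset.sum_cons]
    filter_upwards [AEEqFun.coeFn_add (c i • f i) (∑ j ∈ s, c j • f j),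
      AEEqFun.coeFn_smul (c i) (f i), ih] with a hadd hsmul hsum
    rw [hadd, Pi.add_apply, hsmul, hsum, Pi.smul_apply]

theorem Lp.coeFn_sum_smul {𝕜 E : Type*} [NormedRing 𝕜] [NormedAddCommGroup E] [Module 𝕜 E]
    [IsBoundedSMul 𝕜 E] {q : ℝ≥0∞} (s : Finset ι) (c : ι → 𝕜) (u : ι → Lp E q μ) :
    ⇑(∑ i ∈ s, c i • u i) =ᵐ[μ] fun a => ∑ i ∈ s, c i • u i a := by
  have hcoe : ((∑ i ∈ s, c i • u i : Lp E q μ) : α →ₘ[μ] E) = ∑ i ∈ s, c i • (u i : α →ₘ[μ] E) :=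
    map_sum (Lp.LpSubmodule 𝕜 E q μ).subtype _ _
  exact (congrArg (⇑) hcoe).eventuallyEq.trans (AEEqFun.coeFn_sum_smul s c _)

theorem Lp.ofReal_norm {E : Type*} [NormedAddCommGroup E] {q : ℝ≥0∞} (f : Lp E q μ) :
    ENNReal.ofReal ‖f‖ = ‖f‖ₑ := by
  rw [Lp.norm_def, Lp.enorm_def, ENNReal.ofReal_toReal (Lp.eLpNorm_ne_top f)]

theorem Lp.enorm_rpow_eq_lintegral {E : Type*} [NormedAddCommGroup E] {p : ℝ} (hp : 0 < p)
    (f : Lp E (ENNReal.ofReal p) μ) : ‖f‖ₑ ^ p = ∫⁻ a, ‖f a‖ₑ ^ p ∂μ := by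
  rw [Lp.enorm_def, eLpNorm_eq_eLpNorm' (by simpa using hp) ENNReal.ofReal_ne_top,
    ENNReal.toReal_ofReal hp.le, lintegral_rpow_enorm_eq_rpow_eLpNorm' hp]

theorem Lp.eLpNorm_smul_coe {𝕜 E : Type*} [NormedField 𝕜] [NormedAddCommGroup E]
    [NormedSpace 𝕜 E] {q : ℝ≥0∞} (c : 𝕜) (f : Lp E q μ) :
    eLpNorm ⇑(c • (f : α →ₘ[μ] E)) q μ = ‖c‖ₑ * ‖f‖ₑ := by
  rw [eLpNorm_congr_ae (AEEqFun.coeFn_smul c _), eLpNorm_const_smul, Lp.enorm_def]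

theorem lintegral_rpow_enorm_sum_of_pairwise_eq_zero {E : Type*} [NormedAddCommGroup E]
    [Fintype ι] {q : ℝ} (hq : 0 < q) {f : ι → α → E} (hf : ∀ i, AEStronglyMeasurable (f i) μ)
    (hdisj : ∀ᵐ a ∂μ, Pairwise fun i j => f i a = 0 ∨ f j a = 0) :
    ∫⁻ a, ‖∑ i, f i a‖ₑ ^ q ∂μ = ∑ i, ∫⁻ a, ‖f i a‖ₑ ^ q ∂μ := by
  rw [← lintegral_finsetSum' _ fun i _ => (hf i).enorm.pow_const q]
  refine lintegral_congr_ae (hdisj.mono fun a ha => ?_)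
  exact map_sum_of_pairwise_eq_zero (g := fun x : E => ‖x‖ₑ ^ q)
    (by simp [ENNReal.zero_rpow_of_pos hq]) ha

theorem Lp.norm_sum_smul_of_pairwise_disjoint [Fintype ι] {p : ℝ} (hp : 0 < p)
    (u : ι → Lp ℝ (ENNReal.ofReal p) μ) (hnorm : ∀ i, ‖u i‖ = 1)
    (hdisj : Pairwise fun i j => ∀ᵐ a ∂μ, u i a = 0 ∨ u j a = 0)
    (ε : ι → ℝ) (hε : ∀ i, |ε i| = 1) :
    ‖∑ i, ε i • u i‖ = (Fintype.card ι : ℝ) ^ (1 / p) := by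
  have hunit : ∀ i, ∫⁻ a, ‖u i a‖ₑ ^ p ∂μ = 1 := fun i => by
    rw [← Lp.enorm_rpow_eq_lintegral hp, ← Lp.ofReal_norm, hnorm i, ENNReal.ofReal_one,
      ENNReal.one_rpow]
  have hpow : ‖∑ i, ε i • u i‖ₑ ^ p = Fintype.card ι := calc
    _ = ∫⁻ a, ‖∑ i, ε i • u i a‖ₑ ^ p ∂μ := by
      rw [Lp.enorm_rpow_eq_lintegral hp]
      exact lintegral_congr_ae
        ((Lp.coeFn_sum_smul Finset.univ ε u).mono fun a ha => by simp only [ha])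
    _ = ∑ i, ∫⁻ a, ‖ε i • u i a‖ₑ ^ p ∂μ := by
      refine lintegral_rpow_enorm_sum_of_pairwise_eq_zero hp
        (fun i => (Lp.aestronglyMeasurable (u i)).const_smul (ε i)) ?_
      exact (ae_pairwise_of_pairwise hdisj).mono fun a ha i j hij =>
        (ha hij).imp (fun h => by simp [h]) (fun h => by simp [h])
    _ = Fintype.card ι := by
      have hsign : ∀ i, ‖ε i‖ₑ = 1 := fun i => by
        rw [Real.enorm_eq_ofReal_abs, hε i, ENNReal.ofReal_one]
      simp [hsign, hunit]
  rw [Lp.norm_def, ← Lp.enorm_def, ← ENNReal.rpow_rpow_inv hp.ne' ‖_‖ₑ, hpow, one_div,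
    ← ENNReal.toReal_rpow, ENNReal.toReal_natCast]

end MeasureTheory

section KaltonPeck

variable {α ι : Type*} [MeasurableSpace α] {μ : Measure α}

theorem coeFn_kaltonPeck {q : ℝ≥0∞} (x : Lp ℝ q μ) :
    ⇑(KaltonPeck q μ x) =ᵐ[μ] fun a => x a * Real.log (|x a| / ‖x‖) :=
  AEEqFun.coeFn_mk _ _

theorem kaltonPeck_sum_smul_sub_sum_smul [Fintype ι] {q : ℝ≥0∞} (u : ι → Lp ℝ q μ)
    (hnorm : ∀ i, ‖u i‖ = 1) (hdisj : Pairwise fun i j => ∀ᵐ a ∂μ, u i a = 0 ∨ u j a = 0)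
    (ε : ι → ℝ) (hε : ∀ i, |ε i| = 1) (hv : ‖∑ i, ε i • u i‖ ≠ 0) :
    KaltonPeck q μ (∑ i, ε i • u i) - ∑ i, ε i • KaltonPeck q μ (u i)
      = (-Real.log ‖∑ i, ε i • u i‖) • ((∑ i, ε i • u i : Lp ℝ q μ) : α →ₘ[μ] ℝ) := by
  set v := ∑ i, ε i • u i
  have hKu : ∀ᵐ a ∂μ, ∀ i, KaltonPeck q μ (u i) a = u i a * Real.log |u i a| :=
    ae_all_iff.2 fun i => (coeFn_kaltonPeck (u i)).mono fun a ha => by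
      simp only [ha, hnorm i, div_one]
  apply AEEqFun.ext
  filter_upwards [AEEqFun.coeFn_sub (KaltonPeck q μ v) (∑ i, ε i • KaltonPeck q μ (u i)),
    coeFn_kaltonPeck v, AEEqFun.coeFn_sum_smul Finset.univ ε (fun i => KaltonPeck q μ (u i)),
    AEEqFun.coeFn_smul (-Real.log ‖v‖) (v : α →ₘ[μ] ℝ), Lp.coeFn_sum_smul Finset.univ ε u,
    hKu, ae_pairwise_of_pairwise hdisj] with a hsub hKv hsum hsmul hva hKua hdisja
  have hodd : (∑ i, ε i * u i a) * Real.log |∑ i, ε i * u i a|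
      = ∑ i, ε i * (u i a * Real.log |u i a|) := by
    rw [map_sum_of_pairwise_eq_zero (g := fun t => t * Real.log |t|) (by simp)
      fun i j hij => (hdisja hij).imp (fun h => by simp [h]) (fun h => by simp [h])]
    refine Finset.sum_congr rfl fun i _ => ?_
    rw [abs_mul, hε i, one_mul]
    ring
  change _ = (-Real.log ‖v‖) • v a at hsmul
  change v a = _ at hva
  rw [hsub, Pi.sub_apply, hKv, hsum, hsmul]
  simp only [hKua, hva, smul_eq_mul, Real.mul_log_abs_div _ hv, hodd]
  ring

theorem kaltonPeck_signs_sub_eq {p : ℝ} (hp : 0 < p) {n : ℕ} (hn : 1 ≤ n)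
    (u : Fin n → Lp ℝ (ENNReal.ofReal p) μ) (hnorm : ∀ i, ‖u i‖ = 1)
    (hdisj : Pairwise fun i j => ∀ᵐ a ∂μ, u i a = 0 ∨ u j a = 0)
    (ε : Fin n → ℝ) (hε : ∀ i, |ε i| = 1) :
    KaltonPeck (ENNReal.ofReal p) μ (∑ i, ε i • u i)
        - ∑ i, ε i • KaltonPeck (ENNReal.ofReal p) μ (u i)
      = (-(Real.log n / p)) • ((∑ i, ε i • u i : Lp ℝ (ENNReal.ofReal p) μ) : α →ₘ[μ] ℝ) := by
  have hn_pos : (0 : ℝ) < n := by exact_mod_cast hn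
  have hv := Lp.norm_sum_smul_of_pairwise_disjoint hp u hnorm hdisj ε hε
  rw [Fintype.card_fin] at hv
  rw [kaltonPeck_sum_smul_sub_sum_smul u hnorm hdisj ε hε (by rw [hv]; positivity), hv,
    Real.log_rpow hn_pos, one_div_mul_eq_div]

theorem eLpNorm_kaltonPeck_signs_sub {p : ℝ} (hp : 0 < p) {n : ℕ} (hn : 1 ≤ n)
    (u : Fin n → Lp ℝ (ENNReal.ofReal p) μ) (hnorm : ∀ i, ‖u i‖ = 1)
    (hdisj : Pairwise fun i j => ∀ᵐ a ∂μ, u i a = 0 ∨ u j a = 0)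
    (ε : Fin n → ℝ) (hε : ∀ i, |ε i| = 1) :
    eLpNorm (⇑(KaltonPeck (ENNReal.ofReal p) μ (∑ i, ε i • u i)
        - ∑ i, ε i • KaltonPeck (ENNReal.ofReal p) μ (u i))) (ENNReal.ofReal p) μ
      = ENNReal.ofReal (p⁻¹ * (n : ℝ) ^ (1 / p) * Real.log n) := by
  have hlog : 0 ≤ Real.log n / p := div_nonneg (Real.log_natCast_nonneg n) hp.le
  have hv := Lp.norm_sum_smul_of_pairwise_disjoint hp u hnorm hdisj ε hε
  rw [Fintype.card_fin] at hv
  rw [kaltonPeck_signs_sub_eq hp hn u hnorm hdisj ε hε, Lp.eLpNorm_smul_coe, ← Lp.ofReal_norm,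
    hv, Real.enorm_eq_ofReal_abs, abs_neg, abs_of_nonneg hlog, ← ENNReal.ofReal_mul hlog]
  ring_nf

theorem nabla_eq_of_forall {q : ℝ≥0∞} {Ω : Lp ℝ q μ → α →ₘ[μ] ℝ} {n : ℕ}
    {b : Fin n → Lp ℝ q μ} {c : ℝ≥0∞}
    (h : ∀ s : Fin n → Bool, eLpNorm (⇑(Ω (∑ k, (if s k then (1:ℝ) else -1) • b k)
      - ∑ k, (if s k then (1:ℝ) else -1) • Ω (b k))) q μ = c) :
    nabla Ω b = c := by
  rw [nabla, Finset.sum_congr rfl fun s _ => h s, Finset.sum_const, Finset.card_univ,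
    Fintype.card_fun, Fintype.card_bool, Fintype.card_fin, nsmul_eq_mul, Nat.cast_pow,
    Nat.cast_ofNat, ← mul_assoc,
    ENNReal.inv_mul_cancel (by positivity) (ENNReal.pow_ne_top ENNReal.ofNat_ne_top), one_mul]

end KaltonPeck

/-- For `n` normalized disjointly supported functions `u_i` in `L_p(μ)`,
`0 < p < ∞`, and signs `ε_i = ±1`, the Kalton–Peck map satisfies the exact identity
`𝒦(∑ ε_i u_i) - ∑ ε_i 𝒦(u_i) = -(log n / p) ∑ ε_i u_i`, so that the `L_p`-norm of this
difference equals `p⁻¹ n^{1/p} log n`, and `∇_{[(u_i)]}𝒦 = p⁻¹ n^{1/p} log n`. -/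
theorem kaltonPeck_signs_identity
    {α : Type*} [MeasurableSpace α] {μ : Measure α}
    (p : ℝ) (hp : 0 < p)
    (n : ℕ) (hn : 1 ≤ n) (u : Fin n → Lp ℝ (ENNReal.ofReal p) μ)
    (hnorm : ∀ i, ‖u i‖ = 1)
    (hdisj : Pairwise fun i j => ∀ᵐ a ∂μ, u i a = 0 ∨ u j a = 0)
    (ε : Fin n → ℝ) (hε : ∀ i, ε i = 1 ∨ ε i = -1) :
    (KaltonPeck (ENNReal.ofReal p) μ (∑ i, ε i • u i)
        - ∑ i, ε i • KaltonPeck (ENNReal.ofReal p) μ (u i)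
      = (-(Real.log n / p)) • ((∑ i, ε i • u i : Lp ℝ (ENNReal.ofReal p) μ) : α →ₘ[μ] ℝ)) ∧
    eLpNorm (⇑(KaltonPeck (ENNReal.ofReal p) μ (∑ i, ε i • u i)
        - ∑ i, ε i • KaltonPeck (ENNReal.ofReal p) μ (u i))) (ENNReal.ofReal p) μ
      = ENNReal.ofReal (p⁻¹ * (n : ℝ) ^ (1 / p) * Real.log n) ∧
    nabla (KaltonPeck (ENNReal.ofReal p) μ) u
      = ENNReal.ofReal (p⁻¹ * (n : ℝ) ^ (1 / p) * Real.log n) := by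
  have hε' : ∀ i, |ε i| = 1 := fun i => by rcases hε i with h | h <;> simp [h]
  have hsign : ∀ (s : Fin n → Bool) i, |(if s i then (1:ℝ) else -1)| = 1 := fun s i => by
    split <;> simp
  exact ⟨kaltonPeck_signs_sub_eq hp hn u hnorm hdisj ε hε',
    eLpNorm_kaltonPeck_signs_sub hp hn u hnorm hdisj ε hε',
    nabla_eq_of_forall fun s => eLpNorm_kaltonPeck_signs_sub hp hn u hnorm hdisj _ (hsign s)⟩
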